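/- Let ρ be a density matrix on ℂ^d, let B = (ψ_1,…,ψ_d) be an orthonormal basis of ℂ^d, and set p_i = ⟨ψ_i, ρψ_i⟩. Then the Shannon entropy H(ρ,B) = −∑_i p_i log₂ p_i of the diagonal of ρ in the basis B satisfies H(ρ,B) = S(ρ) + inf_σ S(ρ‖σ), where the infimum runs over all positive definite density matrices σ that are diagonal in the basis B. -/

import Mathlib

/-! Let `U` be the unitary whose columns are the basis vectors. A diagonal `σ` is
`U diag(c) U*`, so `log₂ σ = U diag(log₂ c) U*` and `S(ρ‖σ) = -S(ρ) - ∑ pᵢ log₂ cᵢ`. The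
infimum of the cross entropy `-∑ pᵢ log₂ cᵢ` over strictly positive probability vectors `c` is the
Shannon entropy of `p`: Gibbs' inequality bounds it from below, and mixing `p` with a little of
the uniform distribution approaches it. -/

open Matrix
open scoped Kronecker ComplexOrder

/-- von Neumann entropy in bits (with convention `0 * log₂ 0 = 0`). -/
noncomputable def vnEntropy {n : Type*} [Fintype n] [DecidableEq n] (A : Matrix n n ℂ) : ℝ :=
  if h : A.IsHermitian then -∑ i, h.eigenvalues i * Real.logb 2 (h.eigenvalues i) else 0

/-- `log₂` of a Hermitian matrix via the spectral functional calculus. -/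
noncomputable def matLog2 {n : Type*} [Fintype n] [DecidableEq n] (A : Matrix n n ℂ) :
    Matrix n n ℂ :=
  if h : A.IsHermitian then h.cfc (Real.logb 2) else 0

/-- relative entropy `S(ρ‖σ) = tr(ρ log₂ ρ) − tr(ρ log₂ σ)` (in bits). -/
noncomputable def relEnt {n : Type*} [Fintype n] [DecidableEq n] (ρ σ : Matrix n n ℂ) : ℝ :=
  ((ρ * matLog2 ρ).trace).re - ((ρ * matLog2 σ).trace).re

namespace Real

variable {ι : Type*} [Fintype ι]

lemma mul_log_le_mul_log_add_sub {p c : ℝ} (hp : 0 ≤ p) (hc : 0 < c) :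
    p * log c ≤ p * log p + (c - p) := by
  rcases hp.eq_or_lt with rfl | hp
  · simpa using hc.le
  have h := log_le_sub_one_of_pos (div_pos hc hp)
  rw [log_div hc.ne' hp.ne'] at h
  have := mul_le_mul_of_nonneg_left h hp.le
  rw [mul_sub, mul_sub, mul_div_cancel₀ _ hp.ne'] at this
  linarith

lemma sum_mul_logb_le_sum_mul_logb {b : ℝ} (hb : 1 < b) {p c : ι → ℝ} (hp : ∀ i, 0 ≤ p i)
    (hc : ∀ i, 0 < c i) (hpc : ∑ i, c i ≤ ∑ i, p i) :
    ∑ i, p i * logb b (c i) ≤ ∑ i, p i * logb b (p i) := by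
  simp only [logb, mul_div_assoc', ← Finset.sum_div]
  refine div_le_div_of_nonneg_right ?_ (log_pos hb).le
  calc ∑ i, p i * log (c i) ≤ ∑ i, (p i * log (p i) + (c i - p i)) :=
        Finset.sum_le_sum fun i _ => mul_log_le_mul_log_add_sub (hp i) (hc i)
    _ ≤ ∑ i, p i * log (p i) := by
        rw [Finset.sum_add_distrib, Finset.sum_sub_distrib]
        linarith

lemma sum_mul_logb_add_logb_mul_sum_le {b s : ℝ} (hb : 1 < b) (hs : 0 < s) {p c : ι → ℝ}
    (hp : ∀ i, 0 ≤ p i) (hpc : ∀ i, s * p i ≤ c i) :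
    ∑ i, p i * logb b (p i) + logb b s * ∑ i, p i ≤ ∑ i, p i * logb b (c i) := by
  rw [Finset.mul_sum, ← Finset.sum_add_distrib]
  refine Finset.sum_le_sum fun i _ => ?_
  rcases (hp i).eq_or_lt with h0 | h0
  · simp [← h0]
  rw [mul_comm (logb b s), ← mul_add, ← logb_mul h0.ne' hs.ne', mul_comm (p i) s]
  exact mul_le_mul_of_nonneg_left (logb_le_logb_of_le hb (mul_pos hs h0) (hpc i)) h0.le

lemma isGLB_crossEntropy {b : ℝ} (hb : 1 < b) {p : ι → ℝ} (hp : ∀ i, 0 ≤ p i)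
    (hp1 : ∑ i, p i = 1) :
    IsGLB {r | ∃ c : ι → ℝ, (∀ i, 0 < c i) ∧ ∑ i, c i = 1 ∧ r = -∑ i, p i * logb b (c i)}
      (-∑ i, p i * logb b (p i)) := by
  refine ⟨?_, fun a ha => ?_⟩
  · rintro _ ⟨c, hc, hc1, rfl⟩
    exact neg_le_neg (sum_mul_logb_le_sum_mul_logb hb hp hc (by rw [hc1, hp1]))
  have hcard : (0 : ℝ) < Fintype.card ι := by
    exact_mod_cast Finset.card_pos.2 (Finset.nonempty_of_sum_ne_zero (hp1 ▸ one_ne_zero))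
  refine le_of_forall_pos_le_add fun ε hε => ?_
  -- mix `p` with the uniform distribution, keeping weight `s = b ^ (-ε)` on `p`
  set s := b ^ (-ε)
  have hs0 : 0 < s := rpow_pos_of_pos (by linarith) _
  have hs1 : s < 1 := rpow_lt_one_of_one_lt_of_neg hb (by linarith)
  have hu : 0 < (1 - s) / Fintype.card ι := div_pos (sub_pos.2 hs1) hcard
  set c : ι → ℝ := fun i => s * p i + (1 - s) / Fintype.card ι
  have hc1 : ∑ i, c i = 1 := by
    simp only [c, Finset.sum_add_distrib, ← Finset.mul_sum, hp1, Finset.sum_const,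
      Finset.card_univ, nsmul_eq_mul]
    field_simp
    ring
  have hac := ha ⟨c, fun i => add_pos_of_nonneg_of_pos (mul_nonneg hs0.le (hp i)) hu, hc1, rfl⟩
  have hmix := sum_mul_logb_add_logb_mul_sum_le hb hs0 hp fun i => le_add_of_nonneg_right hu.le
  rw [hp1, mul_one, logb_rpow (by linarith) (by linarith)] at hmix
  linarith

end Real

namespace Matrix

variable {n : Type*} [Fintype n] {𝕜 : Type*} [RCLike 𝕜]

lemma star_mul_mul_transpose_of_apply_self (v : n → n → 𝕜) (A : Matrix n n 𝕜) (i : n) :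
    (star (of v)ᵀ * A * (of v)ᵀ) i i = star (v i) ⬝ᵥ (A *ᵥ v i) := by
  simp only [mul_apply, dotProduct, mulVec, Finset.sum_mul, Finset.mul_sum]
  rw [Finset.sum_comm]
  simp [mul_assoc]

variable [DecidableEq n]

lemma transpose_of_mem_unitaryGroup {v : n → n → 𝕜}
    (hv : ∀ i j, star (v i) ⬝ᵥ v j = if i = j then 1 else 0) : (of v)ᵀ ∈ unitaryGroup n 𝕜 := by
  rw [mem_unitaryGroup_iff']
  ext i j
  simpa [mul_apply, dotProduct, one_apply] using hv i j

lemma transpose_of_mul_diagonal_mul_star (v : n → n → 𝕜) (c : n → 𝕜) :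
    (of v)ᵀ * diagonal c * star (of v)ᵀ = ∑ i, c i • vecMulVec (v i) (star (v i)) := by
  ext j k
  simp [mul_apply, diagonal_apply, vecMulVec_apply, sum_apply, mul_assoc, mul_left_comm]

lemma trace_mul_star_right_conjugate_diagonal (A U : Matrix n n 𝕜) (g : n → 𝕜) :
    (A * (U * diagonal g * star U)).trace = ∑ i, (star U * A * U) i i * g i := by
  rw [← mul_assoc, ← mul_assoc, trace_mul_comm, ← mul_assoc, ← mul_assoc]
  simp [trace, mul_diagonal]

lemma mul_diagonal_comp_eq_diagonal_comp_mul {R : Type*} [CommRing R] [NoZeroDivisors R]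
    {W : Matrix n n R} {c μ : n → R} (h : W * diagonal c = diagonal μ * W) (f : R → R) :
    W * diagonal (f ∘ c) = diagonal (f ∘ μ) * W := by
  ext i j
  have hij := congrFun₂ h i j
  simp only [mul_diagonal, diagonal_mul, Function.comp_apply] at hij ⊢
  by_cases hW : W i j = 0
  · simp [hW]
  · rw [mul_left_cancel₀ hW (hij.trans (mul_comm _ _)), mul_comm]

section unitary

variable {U : Matrix n n 𝕜}

lemma star_left_conjugate_star_right_conjugate (hU : U ∈ unitaryGroup n 𝕜) (A : Matrix n n 𝕜) :
    star U * (U * A * star U) * U = A := by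
  simp only [mul_assoc, Unitary.star_mul_self_of_mem hU, mul_one]
  rw [← mul_assoc, Unitary.star_mul_self_of_mem hU, one_mul]

lemma trace_star_left_conjugate (hU : U ∈ unitaryGroup n 𝕜) (A : Matrix n n 𝕜) :
    (star U * A * U).trace = A.trace := by
  rw [mul_assoc, trace_mul_comm, mul_assoc, Unitary.mul_star_self_of_mem hU, mul_one]

lemma posDef_star_right_conjugate_diagonal_iff (hU : U ∈ unitaryGroup n 𝕜) (c : n → ℝ) :
    (U * diagonal (fun i => (c i : 𝕜)) * star U).PosDef ↔ ∀ i, 0 < c i := by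
  rw [IsUnit.posDef_star_right_conjugate_iff (Unitary.isUnit_coe (U := ⟨U, hU⟩)),
    posDef_diagonal_iff]
  simp

lemma IsHermitian.cfc_eq_of_eq_star_right_conjugate_diagonal {A : Matrix n n 𝕜}
    (hA : A.IsHermitian) (hU : U ∈ unitaryGroup n 𝕜) {c : n → ℝ}
    (h : A = U * diagonal (fun i => (c i : 𝕜)) * star U) (f : ℝ → ℝ) :
    hA.cfc f = U * diagonal (fun i => (f (c i) : 𝕜)) * star U := by
  set V : Matrix n n 𝕜 := (hA.eigenvectorUnitary : Matrix n n 𝕜)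
  have hV : V ∈ unitaryGroup n 𝕜 := hA.eigenvectorUnitary.2
  have hAV : A = V * diagonal (fun i => (hA.eigenvalues i : 𝕜)) * star V := hA.spectral_theorem
  set W := star V * U
  -- `W` intertwines the two diagonalisations, hence also any function of them
  have hW : W * diagonal (fun i => (c i : 𝕜)) =
      diagonal (fun i => (hA.eigenvalues i : 𝕜)) * W := by
    calc W * diagonal (fun i => (c i : 𝕜)) = star V * A * U := by
          simp [W, h, mul_assoc, Unitary.star_mul_self_of_mem hU]
      _ = _ := by
          conv_lhs => rw [hAV]
          simp only [W, ← mul_assoc, Unitary.star_mul_self_of_mem hV, one_mul]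
  have hWf := mul_diagonal_comp_eq_diagonal_comp_mul hW (fun z => (f (RCLike.re z) : 𝕜))
  simp only [Function.comp_def, RCLike.ofReal_re] at hWf
  calc hA.cfc f = V * diagonal (fun i => (f (hA.eigenvalues i) : 𝕜)) * star V := rfl
    _ = V * (W * diagonal (fun i => (f (c i) : 𝕜))) * star U := by
        simp only [hWf, W, mul_assoc, Unitary.mul_star_self_of_mem hU, mul_one]
    _ = _ := by simp [W, ← mul_assoc, Unitary.mul_star_self_of_mem hV]

end unitary

lemma re_trace_mul_matLog2_self {ρ : Matrix n n ℂ} (hρ : ρ.IsHermitian) :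
    (ρ * matLog2 ρ).trace.re = -vnEntropy ρ := by
  have hρV : star (hρ.eigenvectorUnitary : Matrix n n ℂ) * ρ * hρ.eigenvectorUnitary =
      diagonal (fun i => (hρ.eigenvalues i : ℂ)) := by
    simpa [Function.comp_def] using hρ.conjStarAlgAut_star_eigenvectorUnitary
  rw [vnEntropy, dif_pos hρ, neg_neg, matLog2, dif_pos hρ, IsHermitian.cfc,
    Unitary.conjStarAlgAut_apply, trace_mul_star_right_conjugate_diagonal, hρV]
  simp [Complex.re_sum]

variable {ρ U : Matrix n n ℂ}

lemma matLog2_star_right_conjugate_diagonal (hU : U ∈ unitaryGroup n ℂ) (c : n → ℝ) :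
    matLog2 (U * diagonal (fun i => (c i : ℂ)) * star U) =
      U * diagonal (fun i => (Real.logb 2 (c i) : ℂ)) * star U := by
  have hσ : (U * diagonal (fun i => (c i : ℂ)) * star U).IsHermitian :=
    isHermitian_mul_mul_conjTranspose U (isHermitian_diagonal_of_self_adjoint _ (by ext; simp))
  rw [matLog2, dif_pos hσ]
  exact hσ.cfc_eq_of_eq_star_right_conjugate_diagonal hU rfl _

lemma relEnt_star_right_conjugate_diagonal (hρ : ρ.IsHermitian) (hU : U ∈ unitaryGroup n ℂ)
    (c : n → ℝ) :
    relEnt ρ (U * diagonal (fun i => (c i : ℂ)) * star U) =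
      -vnEntropy ρ + -∑ i, ((star U * ρ * U) i i).re * Real.logb 2 (c i) := by
  rw [relEnt, re_trace_mul_matLog2_self hρ, matLog2_star_right_conjugate_diagonal hU,
    trace_mul_star_right_conjugate_diagonal, Complex.re_sum]
  simp only [Complex.re_mul_ofReal]
  ring

lemma setOf_relEnt_star_right_conjugate_diagonal (hρ : ρ.IsHermitian)
    (hU : U ∈ unitaryGroup n ℂ) :
    {r | ∃ σ : Matrix n n ℂ, σ.PosDef ∧ σ.trace = 1 ∧
        (∃ c : n → ℝ, σ = U * diagonal (fun i => (c i : ℂ)) * star U) ∧ r = relEnt ρ σ} =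
      (fun x => -vnEntropy ρ + x) '' {r | ∃ c : n → ℝ, (∀ i, 0 < c i) ∧ ∑ i, c i = 1 ∧
        r = -∑ i, ((star U * ρ * U) i i).re * Real.logb 2 (c i)} := by
  have htr (c : n → ℝ) :
      (U * diagonal (fun i => (c i : ℂ)) * star U).trace = 1 ↔ ∑ i, c i = 1 := by
    rw [← trace_star_left_conjugate hU, star_left_conjugate_star_right_conjugate hU,
      trace_diagonal]
    exact_mod_cast Iff.rfl
  ext r
  constructor
  · rintro ⟨_, hpos, htr1, ⟨c, rfl⟩, rfl⟩
    exact ⟨_, ⟨c, (posDef_star_right_conjugate_diagonal_iff hU c).1 hpos, (htr c).1 htr1, rfl⟩,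
      (relEnt_star_right_conjugate_diagonal hρ hU c).symm⟩
  · rintro ⟨_, ⟨c, hpos, hsum, rfl⟩, rfl⟩
    exact ⟨_, (posDef_star_right_conjugate_diagonal_iff hU c).2 hpos, (htr c).2 hsum, ⟨c, rfl⟩,
      (relEnt_star_right_conjugate_diagonal hρ hU c).symm⟩

theorem isGLB_relEnt_star_right_conjugate_diagonal (hρ : ρ.PosSemidef) (hρ1 : ρ.trace = 1)
    (hU : U ∈ unitaryGroup n ℂ) :
    IsGLB {r | ∃ σ : Matrix n n ℂ, σ.PosDef ∧ σ.trace = 1 ∧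
        (∃ c : n → ℝ, σ = U * diagonal (fun i => (c i : ℂ)) * star U) ∧ r = relEnt ρ σ}
      (-vnEntropy ρ +
        -∑ i, ((star U * ρ * U) i i).re * Real.logb 2 ((star U * ρ * U) i i).re) := by
  have hp (i : n) : 0 ≤ ((star U * ρ * U) i i).re :=
    (Complex.nonneg_iff.1 (hρ.conjTranspose_mul_mul_same U).diag_nonneg).1
  have hp1 : ∑ i, ((star U * ρ * U) i i).re = 1 := by
    simpa [trace, Complex.re_sum] using
      congrArg Complex.re ((trace_star_left_conjugate hU ρ).trans hρ1)
  rw [setOf_relEnt_star_right_conjugate_diagonal hρ.1 hU]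
  exact (OrderIso.addLeft _).isGLB_image'.2 (Real.isGLB_crossEntropy one_lt_two hp hp1)

end Matrix

theorem shannon_entropy_eq_entropy_add_inf_relEnt
    {d : ℕ} (ρ : Matrix (Fin d) (Fin d) ℂ)
    (hρ : ρ.PosSemidef) (hρtr : ρ.trace = 1)
    (v : Fin d → (Fin d → ℂ))
    (hv : ∀ i j, star (v i) ⬝ᵥ v j = if i = j then 1 else 0) :
    (-∑ i, (star (v i) ⬝ᵥ (ρ *ᵥ v i)).re * Real.logb 2 ((star (v i) ⬝ᵥ (ρ *ᵥ v i)).re))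
      = vnEntropy ρ +
        sInf {r : ℝ | ∃ σ : Matrix (Fin d) (Fin d) ℂ, σ.PosDef ∧ σ.trace = 1 ∧
          (∃ c : Fin d → ℝ, σ = ∑ i, (c i : ℂ) • vecMulVec (v i) (star (v i))) ∧
          r = relEnt ρ σ} := by
  have hglb := isGLB_relEnt_star_right_conjugate_diagonal hρ hρtr (transpose_of_mem_unitaryGroup hv)
  simp only [transpose_of_mul_diagonal_mul_star, star_mul_mul_transpose_of_apply_self] at hglb
  rw [hglb.csInf_eq hglb.nonempty]
  ring
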